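/- For a two-component Gaussian mixture density p(x) = w·N(x; μ₁, σ²) + (1−w)·N(x; μ₂, σ²) with equal variances and w ∈ (0,1): if |μ₁ − μ₂| ≤ 2σ then p is unimodal (has at most one local maximum), i.e., two ITD peaks closer than 2σ merge into a single peak. -/

import Mathlib

open Real

/-! At a critical point of `p`, `x` is the mean of `μ₁, μ₂` weighted by `w N(x; μ₁)` and
`(1 - w) N(x; μ₂)`. The log-ratio of these weights is affine in `x`, so with `Δ = μ₁ - μ₂` and
`m = (μ₁ + μ₂) / 2` the critical-point equation reads
`x - Δ / 2 * tanh (Δ / (2σ²) * (x - m) + c) = m`. Since `tanh` is strictly `1`-Lipschitz and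
`Δ² / (4σ²) ≤ 1`, the left side is strictly increasing in `x`, so there is at most one critical
point. -/

namespace Real

theorem hasDerivAt_tanh (x : ℝ) : HasDerivAt tanh (1 - tanh x ^ 2) x := by
  have h := (hasDerivAt_sinh x).div (hasDerivAt_cosh x) (cosh_pos x).ne'
  rw [show sinh / cosh = tanh from funext fun y => (tanh_eq_sinh_div_cosh y).symm] at h
  refine h.congr_deriv ?_
  rw [tanh_eq_sinh_div_cosh]
  field_simp

theorem strictMono_tanh : StrictMono tanh :=
  strictMono_of_hasDerivAt_pos hasDerivAt_tanh fun x => by linarith [tanh_sq_lt_one x]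

theorem strictMono_id_sub_tanh : StrictMono fun x => x - tanh x := by
  have hderiv (x : ℝ) : HasDerivAt (fun x => x - tanh x) (tanh x ^ 2) x :=
    ((hasDerivAt_id' x).sub (hasDerivAt_tanh x)).congr_deriv (by ring)
  have hcont : Continuous fun x => x - tanh x :=
    continuous_iff_continuousAt.2 fun x => (hderiv x).continuousAt
  have hpos {x : ℝ} (hx : x ≠ 0) : 0 < tanh x ^ 2 := by
    have : tanh x ≠ 0 := tanh_zero ▸ tanh_injective.ne hx
    positivity
  refine StrictMonoOn.Iic_union_Ici (a := 0) ?_ ?_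
  · refine strictMonoOn_of_hasDerivWithinAt_pos (convex_Iic 0) hcont.continuousOn
      (fun x _ => (hderiv x).hasDerivWithinAt) fun x hx => hpos ?_
    rw [interior_Iic] at hx
    exact hx.ne
  · refine strictMonoOn_of_hasDerivWithinAt_pos (convex_Ici 0) hcont.continuousOn
      (fun x _ => (hderiv x).hasDerivWithinAt) fun x hx => hpos ?_
    rw [interior_Ici] at hx
    exact hx.ne'

theorem abs_tanh_sub_tanh_lt {s t : ℝ} (h : s ≠ t) : |tanh t - tanh s| < |t - s| := by
  wlog hst : s < t generalizing s t
  · rw [abs_sub_comm, abs_sub_comm t]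
    exact this h.symm (h.lt_or_gt.resolve_left hst)
  rw [abs_of_pos (sub_pos.2 (strictMono_tanh hst)), abs_of_pos (sub_pos.2 hst)]
  linarith [strictMono_id_sub_tanh hst]

theorem tanh_half_log_div {a b : ℝ} (ha : 0 < a) (hb : 0 < b) :
    tanh (log (a / b) / 2) = (a - b) / (a + b) := by
  have hmem : (a - b) / (a + b) ∈ Set.Ioo (-1 : ℝ) 1 := by
    constructor
    · rw [lt_div_iff₀ (by positivity)]; linarith
    · rw [div_lt_one (by positivity)]; linarith
  rw [← tanh_artanh hmem, artanh_eq_half_log (Set.Ioo_subset_Icc_self hmem)]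
  have hsum : a + b ≠ 0 := by positivity
  have hplus : 1 + (a - b) / (a + b) = 2 * a / (a + b) := by field_simp; ring
  have hminus : 1 - (a - b) / (a + b) = 2 * b / (a + b) := by field_simp; ring
  rw [hplus, hminus, div_div_div_cancel_right₀ hsum, mul_div_mul_left _ _ two_ne_zero,
    one_div_mul_eq_div]

end Real

theorem hasDerivAt_exp_neg_sq_div (μ s x : ℝ) :
    HasDerivAt (fun y => exp (-(y - μ) ^ 2 / (2 * s)))
      (-(x - μ) / s * exp (-(x - μ) ^ 2 / (2 * s))) x := by
  have hexponent : HasDerivAt (fun y => -(y - μ) ^ 2 / (2 * s)) (-(x - μ) / s) x := by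
    have h := (((hasDerivAt_id' x).sub_const μ).fun_pow 2).fun_neg.div_const (2 * s)
    exact h.congr_deriv (by ring)
  exact hexponent.exp.congr_deriv (mul_comm _ _)

theorem mul_sub_add_mul_sub_eq_mul_tanh {A B : ℝ} (hA : 0 < A) (hB : 0 < B) (x μ₁ μ₂ : ℝ) :
    A * (x - μ₁) + B * (x - μ₂) =
      (A + B) * (x - (μ₁ + μ₂) / 2 - (μ₁ - μ₂) / 2 * tanh (log (A / B) / 2)) := by
  have : A + B ≠ 0 := by positivity
  rw [tanh_half_log_div hA hB]
  field_simp
  ring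

theorem half_log_mul_exp_div_mul_exp {a b : ℝ} (ha : 0 < a) (hb : 0 < b) (μ₁ μ₂ s x : ℝ) :
    log (a * exp (-(x - μ₁) ^ 2 / (2 * s)) / (b * exp (-(x - μ₂) ^ 2 / (2 * s)))) / 2 =
      (μ₁ - μ₂) / (2 * s) * (x - (μ₁ + μ₂) / 2) + log (a / b) / 2 := by
  rw [mul_div_mul_comm, ← exp_sub, log_mul (by positivity) (exp_pos _).ne', log_exp]
  ring

theorem sub_mul_tanh_eq_of_deriv_eq_zero {a b μ₁ μ₂ s x : ℝ} (ha : 0 < a) (hb : 0 < b)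
    (hs : s ≠ 0)
    (hx : deriv (fun y => a * exp (-(y - μ₁) ^ 2 / (2 * s)) +
      b * exp (-(y - μ₂) ^ 2 / (2 * s))) x = 0) :
    x - (μ₁ - μ₂) / 2 * tanh ((μ₁ - μ₂) / (2 * s) * (x - (μ₁ + μ₂) / 2) + log (a / b) / 2) =
      (μ₁ + μ₂) / 2 := by
  set A := a * exp (-(x - μ₁) ^ 2 / (2 * s))
  set B := b * exp (-(x - μ₂) ^ 2 / (2 * s))
  have hA : 0 < A := by positivity
  have hB : 0 < B := by positivity
  have hcrit : A * (x - μ₁) + B * (x - μ₂) = 0 := by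
    have hderiv : HasDerivAt (fun y => a * exp (-(y - μ₁) ^ 2 / (2 * s)) +
        b * exp (-(y - μ₂) ^ 2 / (2 * s))) (-(A * (x - μ₁) + B * (x - μ₂)) / s) x :=
      (((hasDerivAt_exp_neg_sq_div μ₁ s x).const_mul a).add
        ((hasDerivAt_exp_neg_sq_div μ₂ s x).const_mul b)).congr_deriv (by ring)
    rw [hderiv.deriv, div_eq_zero_iff, neg_eq_zero] at hx
    exact hx.resolve_right hs
  rw [mul_sub_add_mul_sub_eq_mul_tanh hA hB, half_log_mul_exp_div_mul_exp ha hb] at hcrit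
  have := (mul_eq_zero.1 hcrit).resolve_left (by positivity)
  linarith

theorem strictMono_sub_mul_tanh {k β : ℝ} (h : |k * β| ≤ 1) (m c : ℝ) :
    StrictMono fun x => x - k * tanh (β * (x - m) + c) := by
  intro x y hxy
  suffices k * (tanh (β * (y - m) + c) - tanh (β * (x - m) + c)) < y - x by
    simp only; linarith
  rcases eq_or_ne (k * β) 0 with hkβ | hkβ
  · rcases mul_eq_zero.1 hkβ with rfl | rfl <;> simpa using hxy
  have hlip := abs_tanh_sub_tanh_lt (s := β * (x - m) + c) (t := β * (y - m) + c)
    (fun h => hxy.ne (mul_left_cancel₀ (right_ne_zero_of_mul hkβ) (by linarith)))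
  calc k * (tanh (β * (y - m) + c) - tanh (β * (x - m) + c))
      ≤ |k| * |tanh (β * (y - m) + c) - tanh (β * (x - m) + c)| := by
        rw [← abs_mul]; exact le_abs_self _
    _ < |k| * |β * (y - m) + c - (β * (x - m) + c)| :=
        mul_lt_mul_of_pos_left hlip (abs_pos.2 (left_ne_zero_of_mul hkβ))
    _ = |k * β| * (y - x) := by
        rw [show β * (y - m) + c - (β * (x - m) + c) = β * (y - x) by ring, abs_mul, abs_mul,
          abs_of_pos (sub_pos.2 hxy), mul_assoc]
    _ ≤ y - x := by nlinarith

/-- A two-component equal-variance Gaussian mixture whose means are at most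
`2σ` apart is unimodal: it has no two distinct local maxima. -/
theorem gaussian_mixture_unimodal_when_close
    (w μ₁ μ₂ σ : ℝ) (hw : w ∈ Set.Ioo (0 : ℝ) 1) (hσ : 0 < σ)
    (hclose : |μ₁ - μ₂| ≤ 2 * σ) :
    let N : ℝ → ℝ → ℝ := fun x μ =>
      (1 / (σ * Real.sqrt (2 * π))) * Real.exp (-(x - μ) ^ 2 / (2 * σ ^ 2))
    let p : ℝ → ℝ := fun x => w * N x μ₁ + (1 - w) * N x μ₂
    ¬ ∃ a b : ℝ, a ≠ b ∧ IsLocalMax p a ∧ IsLocalMax p b := by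
  intro N p
  rintro ⟨a, b, hab, ha, hb⟩
  obtain ⟨hw₀, hw₁⟩ := hw
  set C := 1 / (σ * √(2 * π))
  have hC : 0 < C := by positivity
  have hp : p = fun y => w * C * exp (-(y - μ₁) ^ 2 / (2 * σ ^ 2)) +
      (1 - w) * C * exp (-(y - μ₂) ^ 2 / (2 * σ ^ 2)) := by
    funext y
    simp only [p, N]
    ring
  have hcrit (x : ℝ) (hx : IsLocalMax p x) := sub_mul_tanh_eq_of_deriv_eq_zero
    (mul_pos hw₀ hC) (mul_pos (sub_pos.2 hw₁) hC) (pow_pos hσ 2).ne' (hp ▸ hx.deriv_eq_zero)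
  have hslope : |(μ₁ - μ₂) / 2 * ((μ₁ - μ₂) / (2 * σ ^ 2))| ≤ 1 := by
    rw [show (μ₁ - μ₂) / 2 * ((μ₁ - μ₂) / (2 * σ ^ 2)) = ((μ₁ - μ₂) / (2 * σ)) ^ 2 by
      field_simp, abs_sq, sq_le_one_iff_abs_le_one, abs_div,
      abs_of_pos (by positivity : 0 < 2 * σ), div_le_one (by positivity)]
    exact hclose
  exact hab <| (strictMono_sub_mul_tanh hslope _ _).injective <|
    (hcrit a ha).trans (hcrit b hb).symm
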